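/- arXiv:2508.17808 — 2 statements merged into one kernel-verified Lean document; each statement's English description precedes it below -/
import Mathlib

section
/- Let A, B be skew-Hermitian n×n matrices and Δ > 0. Then ‖e^{(A+B)Δ} − e^{AΔ/2} e^{BΔ} e^{AΔ/2}‖ ≤ C·Δ³ for a constant C depending only on ‖A‖ and ‖B‖: the symmetric (Strang) splitting has local error of third order. -/
/-!
Write `P(x) = 1 + x + x²/2` for the quadratic Taylor polynomial of `exp`. Replacing every
exponential in `exp(t(A+B)) - exp(tA/2) exp(tB) exp(tA/2)` by `P` changes it by `O(t³)` as
`t → 0`, and for the polynomials the defect is an explicit polynomial in `t` divisible by `t³`: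
its terms of degree `≤ 2` cancel because the splitting is symmetric. Hence the defect is
`O(t³)` near `0`. For skew-Hermitian `A, B` all three exponentials are unitary, so the defect is
also bounded for all `t > 0`, and the two facts together give one constant `C` for every `Δ > 0`.
-/

attribute [local instance] Matrix.linftyOpNormedAddCommGroup Matrix.linftyOpNormedRing
  Matrix.linftyOpNormedAlgebra

open NormedSpace Asymptotics Filter Topology

lemma Asymptotics.IsBigO.mul_sub_mul {α R : Type*} [SeminormedRing R] {l : Filter α}
    {f₁ f₂ g₁ g₂ : α → R} {φ : α → ℝ}
    (h₁ : (fun x => f₁ x - g₁ x) =O[l] φ) (h₂ : (fun x => f₂ x - g₂ x) =O[l] φ)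
    (hf₂ : f₂ =O[l] fun _ => (1 : ℝ)) (hg₁ : g₁ =O[l] fun _ => (1 : ℝ)) :
    (fun x => f₁ x * f₂ x - g₁ x * g₂ x) =O[l] φ := by
  have split : ∀ x, f₁ x * f₂ x - g₁ x * g₂ x = (f₁ x - g₁ x) * f₂ x + g₁ x * (f₂ x - g₂ x) :=
    fun x => by noncomm_ring
  simp_rw [split]
  exact (by simpa using h₁.mul hf₂ : _ =O[l] φ).add (by simpa using hg₁.mul h₂)

lemma exists_forall_pos_norm_le_mul_pow_of_isBigO {E : Type*} [SeminormedAddCommGroup E]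
    {f : ℝ → E} {M : ℝ} {k : ℕ} (hf : f =O[𝓝[>] 0] fun t => t ^ k)
    (hM : ∀ t > 0, ‖f t‖ ≤ M) : ∃ C : ℝ, 0 ≤ C ∧ ∀ t > 0, ‖f t‖ ≤ C * t ^ k := by
  obtain ⟨c, hc0, hc⟩ := hf.exists_nonneg
  obtain ⟨ε, hε, hsmall⟩ := mem_nhdsGT_iff_exists_Ioo_subset.1 hc.bound
  have hε0 : (0 : ℝ) < ε := hε
  refine ⟨c + max M 0 / ε ^ k, by positivity, fun t ht => ?_⟩
  rcases lt_or_ge t ε with htε | htε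
  · calc ‖f t‖ ≤ c * ‖t ^ k‖ := hsmall ⟨ht, htε⟩
      _ = c * t ^ k := by rw [norm_pow, Real.norm_of_nonneg ht.le]
      _ ≤ (c + max M 0 / ε ^ k) * t ^ k := by
        gcongr
        exact le_add_of_nonneg_right (by positivity)
  · calc ‖f t‖ ≤ max M 0 / ε ^ k * ε ^ k := by
          rw [div_mul_cancel₀ _ (by positivity)]
          exact (hM t ht).trans (le_max_left _ _)
      _ ≤ (c + max M 0 / ε ^ k) * t ^ k := by gcongr; linarith

section StrangSplitting

variable {𝔸 : Type*} [NormedRing 𝔸] [NormedAlgebra ℝ 𝔸]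

noncomputable def expTaylor2 (x : 𝔸) : 𝔸 := 1 + x + (2⁻¹ : ℝ) • x ^ 2

noncomputable def strangDefect (f : 𝔸 → 𝔸) (A B : 𝔸) (t : ℝ) : 𝔸 :=
  f (t • (A + B)) - f ((t / 2) • A) * f (t • B) * f ((t / 2) • A)

noncomputable def strangRemainder (A B : 𝔸) (t : ℝ) : 𝔸 :=
  -(((8⁻¹ : ℝ) • (A * A * A) + (8⁻¹ : ℝ) • (A * A * B) + (4⁻¹ : ℝ) • (A * B * A)
      + (4⁻¹ : ℝ) • (A * B * B) + (8⁻¹ : ℝ) • (B * A * A) + (4⁻¹ : ℝ) • (B * B * A))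
    + t • ((64⁻¹ : ℝ) • (A * A * A * A) + (16⁻¹ : ℝ) • (A * A * B * A)
      + (16⁻¹ : ℝ) • (A * A * B * B) + (16⁻¹ : ℝ) • (A * B * A * A)
      + (8⁻¹ : ℝ) • (A * B * B * A) + (16⁻¹ : ℝ) • (B * B * A * A))
    + t ^ 2 • ((64⁻¹ : ℝ) • (A * A * B * A * A) + (32⁻¹ : ℝ) • (A * A * B * B * A)
      + (32⁻¹ : ℝ) • (A * B * B * A * A))
    + t ^ 3 • (128⁻¹ : ℝ) • (A * A * B * B * A * A))

lemma expSeries_partialSum_three (x : 𝔸) :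
    (expSeries ℝ 𝔸).partialSum 3 x = expTaylor2 x := by
  simp [FormalMultilinearSeries.partialSum, expSeries_apply_eq, Finset.sum_range_succ, expTaylor2]

@[fun_prop]
lemma continuous_expTaylor2 : Continuous (expTaylor2 : 𝔸 → 𝔸) := by
  unfold expTaylor2
  fun_prop

lemma strangDefect_expTaylor2 (A B : 𝔸) (t : ℝ) :
    strangDefect expTaylor2 A B t = t ^ 3 • strangRemainder A B t := by
  simp only [strangDefect, expTaylor2, strangRemainder, sq, smul_add, smul_neg, mul_add, add_mul,
    smul_mul_assoc, mul_smul_comm, smul_smul, one_mul, mul_one, mul_assoc]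
  module

lemma strangDefect_expTaylor2_isBigO (A B : 𝔸) :
    strangDefect expTaylor2 A B =O[𝓝 0] fun t => t ^ 3 := by
  have hR : Continuous (strangRemainder A B) := by
    unfold strangRemainder
    fun_prop
  simp_rw [funext (strangDefect_expTaylor2 A B)]
  simpa using (isBigO_refl (fun t : ℝ => t ^ 3) _).smul ((hR.tendsto 0).isBigO_one ℝ)

variable [CompleteSpace 𝔸]

lemma exp_sub_expTaylor2_isBigO :
    (fun x : 𝔸 => exp x - expTaylor2 x) =O[𝓝 0] fun x => ‖x‖ ^ 3 := by
  simpa [expSeries_partialSum_three] using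
    (exp_hasFPowerSeriesAt_zero (𝕂 := ℝ) (𝔸 := 𝔸)).isBigO_sub_partialSum_pow 3

lemma exp_smul_sub_expTaylor2_isBigO (X : 𝔸) :
    (fun t : ℝ => exp (t • X) - expTaylor2 (t • X)) =O[𝓝 0] fun t => t ^ 3 := by
  have hX : Tendsto (fun t : ℝ => t • X) (𝓝 0) (𝓝 0) := by
    simpa using (tendsto_id (x := 𝓝 (0 : ℝ))).smul_const X
  refine (exp_sub_expTaylor2_isBigO.comp_tendsto hX).trans (IsBigO.of_bound (‖X‖ ^ 3) ?_)
  refine Eventually.of_forall fun t => ?_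
  simp [norm_smul, mul_pow, mul_comm]

lemma strangDefect_exp_isBigO (A B : 𝔸) :
    strangDefect exp A B =O[𝓝 0] fun t => t ^ 3 := by
  have hexp : Continuous (exp : 𝔸 → 𝔸) :=
    continuous_iff_continuousAt.2 fun x => (exp_analytic (𝕂 := ℝ) x).continuousAt
  have bounded : ∀ g : ℝ → 𝔸, Continuous g → g =O[𝓝 0] fun _ => (1 : ℝ) :=
    fun g hg => (hg.tendsto 0).isBigO_one ℝ
  have taylorHalf :
      (fun t : ℝ => exp ((t / 2) • A) - expTaylor2 ((t / 2) • A)) =O[𝓝 0] fun t => t ^ 3 := by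
    simpa only [smul_smul, div_eq_mul_inv] using exp_smul_sub_expTaylor2_isBigO ((2⁻¹ : ℝ) • A)
  have product := (taylorHalf.mul_sub_mul (exp_smul_sub_expTaylor2_isBigO B)
    (bounded _ (by fun_prop)) (bounded _ (by fun_prop))).mul_sub_mul taylorHalf
    (bounded _ (by fun_prop)) (bounded _ (by fun_prop))
  refine (((exp_smul_sub_expTaylor2_isBigO (A + B)).add (strangDefect_expTaylor2_isBigO A B)).sub
    product).congr_left fun t => ?_
  simp only [strangDefect]
  abel

end StrangSplitting

lemma Matrix.linfty_opNorm_le_card_of_mem_unitaryGroup {𝕜 m : Type*} [RCLike 𝕜] [Fintype m]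
    [DecidableEq m] {U : Matrix m m 𝕜} (hU : U ∈ Matrix.unitaryGroup m 𝕜) :
    ‖U‖ ≤ Fintype.card m := by
  suffices ‖U‖₊ ≤ Fintype.card m by exact_mod_cast this
  rw [Matrix.linfty_opNNNorm_def]
  refine Finset.sup_le fun i _ => ?_
  calc ∑ j, ‖U i j‖₊ ≤ ∑ _j : m, (1 : NNReal) :=
        Finset.sum_le_sum fun j _ => entry_norm_bound_of_unitary hU i j
    _ = Fintype.card m := by simp

lemma Matrix.linfty_opNorm_exp_le_card {𝕜 m : Type*} [RCLike 𝕜] [Fintype m] [DecidableEq m]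
    {X : Matrix m m 𝕜} (hX : X.conjTranspose = -X) : ‖exp X‖ ≤ Fintype.card m := by
  -- instance search does not see through the `L∞` operator norm topology used by `exp` here
  have : @ContinuousStar (Matrix m m 𝕜)
      Matrix.linftyOpNormedAddCommGroup.toUniformSpace.toTopologicalSpace _ :=
    ⟨continuous_id.matrix_conjTranspose⟩
  exact Matrix.linfty_opNorm_le_card_of_mem_unitaryGroup <|
    exp_mem_unitary_of_mem_skewAdjoint (skewAdjoint.mem_iff.2 hX)

/-- For skew-Hermitian `n×n` matrices `A, B`, the symmetric (Strang)
splitting has local error of third order: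
`‖e^{(A+B)Δ} − e^{AΔ/2} e^{BΔ} e^{AΔ/2}‖ ≤ C·Δ³` for a constant `C` depending only on
`‖A‖` and `‖B‖`. -/
theorem strang_splitting_third_order
    (n : ℕ) (A B : Matrix (Fin n) (Fin n) ℂ)
    (hA : A.conjTranspose = -A) (hB : B.conjTranspose = -B) :
    ∃ C : ℝ, 0 ≤ C ∧ ∀ Δ : ℝ, 0 < Δ →
      ‖NormedSpace.exp (Δ • (A + B)) -
        NormedSpace.exp ((Δ / 2) • A) * NormedSpace.exp (Δ • B) *
          NormedSpace.exp ((Δ / 2) • A)‖ ≤ C * Δ ^ 3 := by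
  have expBound : ∀ (t : ℝ) (X : Matrix (Fin n) (Fin n) ℂ), X.conjTranspose = -X →
      ‖exp (t • X)‖ ≤ n := fun t X hX => by
    simpa using Matrix.linfty_opNorm_exp_le_card (X := t • X)
      (by rw [Matrix.conjTranspose_smul, hX, star_trivial, smul_neg])
  have hAB : (A + B).conjTranspose = -(A + B) := by
    rw [Matrix.conjTranspose_add, hA, hB, neg_add]
  refine exists_forall_pos_norm_le_mul_pow_of_isBigO (M := n + n * n * n)
    ((strangDefect_exp_isBigO A B).mono nhdsWithin_le_nhds) fun Δ _ => ?_
  refine (norm_sub_le _ _).trans (add_le_add (expBound Δ _ hAB) (norm_mul₃_le.trans ?_))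
  gcongr
  exacts [expBound _ A hA, expBound _ B hB, expBound _ A hA]
end

section
/- In SU(2), the curve C(t) = exp((i t/2)(cos φ₀ · σ_x + sin φ₀ · σ_z + β σ_y)) · exp(−(i t/2) β σ_y) is horizontal for the distribution spanned by (i/2)σ_x and (i/2)σ_z: its logarithmic derivative C(t)⁻¹ C'(t) equals (i/2)(cos(βt + φ₀) σ_x + sin(βt + φ₀) σ_z) and hence lies in span{(i/2)σ_x, (i/2)σ_z} for all t. -/
attribute [local instance] Matrix.linftyOpNormedAddCommGroup Matrix.linftyOpNormedRing
  Matrix.linftyOpNormedAlgebra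

/-- The Pauli matrix `σ_x`. -/
def pauliX : Matrix (Fin 2) (Fin 2) ℂ := !![0, 1; 1, 0]

/-- The Pauli matrix `σ_y`. -/
def pauliY : Matrix (Fin 2) (Fin 2) ℂ := !![0, -Complex.I; Complex.I, 0]

/-- The Pauli matrix `σ_z`. -/
def pauliZ : Matrix (Fin 2) (Fin 2) ℂ := !![1, 0; 0, -1]
/-
Write the curve as `exp (t • a) * exp (t • b)` with `b = (β/2) J`, `J = -i σ_y`; its logarithmic
derivative is `exp (-t • b) a exp (t • b) + b`. Since `J² = -1`, `exp (θ • J) = cos θ + sin θ J`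
is a rotation commuting with `J`, so the `σ_y`-part of `a` cancels `b`; and since `σ_x`, `σ_z`
anticommute with `J`, conjugation by this rotation turns `cos φ₀ σ_x + sin φ₀ σ_z` into
`cos (βt + φ₀) σ_x + sin (βt + φ₀) σ_z`.
-/

open NormedSpace

theorem exp_smul_eq_cos_add_sin_smul {𝔸 : Type*} [NormedRing 𝔸] [NormedAlgebra ℝ 𝔸]
    [CompleteSpace 𝔸] {J : 𝔸} (hJ : J * J = -1) (θ : ℝ) :
    exp (θ • J) = Real.cos θ • (1 : 𝔸) + Real.sin θ • J := by
  -- `I ↦ J` embeds `ℂ` continuously in `𝔸`, and such embeddings commute with `exp`.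
  let _ : NormedAlgebra ℚ 𝔸 := .restrictScalars ℚ ℝ 𝔸
  let φ : ℂ →ₐ[ℝ] 𝔸 := Complex.lift ⟨J, hJ⟩
  have hφ : Continuous φ := φ.toLinearMap.continuous_of_finiteDimensional
  calc exp (θ • J) = φ (exp (θ * Complex.I)) := by
        rw [map_exp φ hφ]; simp [φ]
    _ = φ (Real.cos θ + Real.sin θ * Complex.I) := by
        rw [← Complex.exp_eq_exp_ℂ, Complex.exp_mul_I, Complex.ofReal_cos, Complex.ofReal_sin]
    _ = Real.cos θ • (1 : 𝔸) + Real.sin θ • J := by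
        simp [φ, Algebra.algebraMap_eq_smul_one, Complex.cos_ofReal_re, Complex.sin_ofReal_re]

theorem hasDerivAt_exp_smul_mul_exp_smul {𝔸 : Type*} [NormedRing 𝔸] [NormedAlgebra ℝ 𝔸]
    [CompleteSpace 𝔸] {a b c : 𝔸} {t : ℝ}
    (h : a * exp (t • b) + exp (t • b) * b = exp (t • b) * c) :
    HasDerivAt (fun s : ℝ => exp (s • a) * exp (s • b)) (exp (t • a) * exp (t • b) * c) t := by
  refine ((hasDerivAt_exp_smul_const a t).mul (hasDerivAt_exp_smul_const b t)).congr_deriv ?_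
  rw [mul_assoc, mul_assoc, ← mul_add, ← h]

def rotationGenerator : Matrix (Fin 2) (Fin 2) ℂ := !![0, -1; 1, 0]

lemma rotationGenerator_mul_self : rotationGenerator * rotationGenerator = -1 := by
  ext i j; fin_cases i <;> fin_cases j <;> simp [rotationGenerator]

lemma pauliY_eq_I_smul_rotationGenerator : pauliY = Complex.I • rotationGenerator := by
  ext i j; fin_cases i <;> fin_cases j <;> simp [pauliY, rotationGenerator]

lemma pauliXZ_mul_rotation_eq_rotation_mul (φ θ : ℝ) :
    (Real.cos φ • pauliX + Real.sin φ • pauliZ) *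
        (Real.cos θ • 1 + Real.sin θ • rotationGenerator) =
      (Real.cos θ • 1 + Real.sin θ • rotationGenerator) *
        (Real.cos (φ + 2 * θ) • pauliX + Real.sin (φ + 2 * θ) • pauliZ) := by
  rw [Real.cos_add, Real.sin_add, Real.cos_two_mul, Real.sin_two_mul]
  have h := Complex.sin_sq_add_cos_sq (θ : ℂ)
  ext i j
  fin_cases i <;> fin_cases j <;> simp [pauliX, pauliZ, rotationGenerator, Matrix.mul_apply]
  · linear_combination -2 * Complex.sin φ * Complex.cos θ * h
  · linear_combination -2 * Complex.cos φ * Complex.cos θ * h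
  · linear_combination -2 * Complex.cos φ * Complex.cos θ * h
  · linear_combination 2 * Complex.sin φ * Complex.cos θ * h

lemma exp_smul_rotationGenerator (θ : ℝ) :
    exp (θ • rotationGenerator) = Real.cos θ • 1 + Real.sin θ • rotationGenerator :=
  exp_smul_eq_cos_add_sin_smul rotationGenerator_mul_self θ

open Complex in
lemma mul_exp_rotation_add_exp_rotation_mul (φ₀ β t : ℝ) :
    (I / 2) • (Real.cos φ₀ • pauliX + Real.sin φ₀ • pauliZ + β • pauliY) *
        exp (t • (β / 2) • rotationGenerator) +
      exp (t • (β / 2) • rotationGenerator) * ((β / 2) • rotationGenerator) =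
    exp (t • (β / 2) • rotationGenerator) *
      ((I / 2) • (Real.cos (β * t + φ₀) • pauliX + Real.sin (β * t + φ₀) • pauliZ)) := by
  rw [smul_smul, exp_smul_rotationGenerator]
  set R := Real.cos (t * (β / 2)) • (1 : Matrix (Fin 2) (Fin 2) ℂ) +
    Real.sin (t * (β / 2)) • rotationGenerator
  have hJR : Commute rotationGenerator R :=
    ((Commute.one_right _).smul_right _).add_right ((Commute.refl _).smul_right _)
  have hrot := pauliXZ_mul_rotation_eq_rotation_mul φ₀ (t * (β / 2))
  rw [show φ₀ + 2 * (t * (β / 2)) = β * t + φ₀ by ring] at hrot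
  calc _ = (I / 2) • ((Real.cos φ₀ • pauliX + Real.sin φ₀ • pauliZ) * R) +
        (β / 2) • (R * rotationGenerator - rotationGenerator * R) := by
        rw [pauliY_eq_I_smul_rotationGenerator]
        simp only [add_mul, smul_mul_assoc, mul_smul_comm, smul_add, smul_sub]
        match_scalars
        · rfl
        · rfl
        · linear_combination (β / 2 : ℂ) * I_mul_I
        · rfl
    _ = _ := by rw [hJR.eq, sub_self, smul_zero, add_zero, hrot, mul_smul_comm]

/-- In SU(2), the curve
`C(t) = exp((i t/2)(cos φ₀ σ_x + sin φ₀ σ_z + β σ_y)) · exp(−(i t/2) β σ_y)`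
is horizontal for the distribution spanned by `(i/2)σ_x` and `(i/2)σ_z`: its
logarithmic derivative is `C'(t) = C(t)·c(t)` with
`c(t) = (i/2)(cos(βt+φ₀) σ_x + sin(βt+φ₀) σ_z)`, which lies in
`span_ℝ{(i/2)σ_x, (i/2)σ_z}` for all `t`. -/
theorem subriemannian_geodesic_horizontal (φ₀ β : ℝ) :
    ∀ t : ℝ,
      HasDerivAt
        (fun s : ℝ =>
          NormedSpace.exp ((Complex.I * s / 2) •
              (Real.cos φ₀ • pauliX + Real.sin φ₀ • pauliZ + β • pauliY)) *
          NormedSpace.exp ((-(Complex.I * s / 2) * β) • pauliY))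
        ((NormedSpace.exp ((Complex.I * t / 2) •
              (Real.cos φ₀ • pauliX + Real.sin φ₀ • pauliZ + β • pauliY)) *
          NormedSpace.exp ((-(Complex.I * t / 2) * β) • pauliY)) *
         ((Complex.I / 2) •
            (Real.cos (β * t + φ₀) • pauliX + Real.sin (β * t + φ₀) • pauliZ))) t ∧
      (Complex.I / 2) • (Real.cos (β * t + φ₀) • pauliX + Real.sin (β * t + φ₀) • pauliZ)
        ∈ Submodule.span ℝ
            ({(Complex.I / 2) • pauliX, (Complex.I / 2) • pauliZ} :
              Set (Matrix (Fin 2) (Fin 2) ℂ)) := by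
  intro t
  have hA (s : ℝ) (M : Matrix (Fin 2) (Fin 2) ℂ) :
      (Complex.I * s / 2) • M = s • (Complex.I / 2) • M := by
    rw [← Complex.coe_smul, smul_smul]
    congr 1
    ring
  have hB (s : ℝ) :
      (-(Complex.I * s / 2) * β) • pauliY = s • (β / 2) • rotationGenerator := by
    rw [pauliY_eq_I_smul_rotationGenerator, smul_smul, smul_smul,
      ← Complex.coe_smul]
    congr 1
    push_cast
    linear_combination (-(s * β / 2) : ℂ) * Complex.I_mul_I
  refine ⟨?_, Submodule.mem_span_pair.2 ⟨Real.cos (β * t + φ₀), Real.sin (β * t + φ₀), ?_⟩⟩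
  · simp only [hA, hB]
    exact hasDerivAt_exp_smul_mul_exp_smul (mul_exp_rotation_add_exp_rotation_mul φ₀ β t)
  · rw [smul_add, smul_comm (Complex.I / 2), smul_comm (Complex.I / 2)]
end
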